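/- arXiv:2204.12821 — 6 statements merged into one kernel-verified Lean document; each statement's English description precedes it below -/
import Mathlib

section
/- Let a₀ ∈ ℝ, τ₁ > 0, and define s* = -a₀ - 1/τ₁ and a₁ = -e^{-1-τ₁a₀}/τ₁. Then s* is a root of multiplicity at least 2 of the quasipolynomial Δ(s) = s + a₀ - a₁·e^{-sτ₁}, i.e., Δ(s*) = 0 and Δ'(s*) = 0. -/
/-!
Since `Δ'(s) = 1 + τ₁ a₁ e^{-sτ₁}`, both claims reduce to `a₁ e^{-s* τ₁} = -1/τ₁`, which holds
because `-s* τ₁ = 1 + τ₁ a₀` cancels the exponent in `a₁`. Then `Δ(s*) = s* + a₀ + 1/τ₁ = 0` and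
`Δ'(s*) = 1 - 1 = 0`.
-/

open Complex

theorem hasDerivAt_add_sub_mul_exp_neg_mul (a₀ a₁ τ s : ℂ) :
    HasDerivAt (fun s => s + a₀ - a₁ * exp (-s * τ)) (1 + a₁ * τ * exp (-s * τ)) s := by
  have hlin : HasDerivAt (fun s : ℂ => -s * τ) (-τ) s := by
    simpa using (hasDerivAt_id s).neg.mul_const τ
  exact (((hasDerivAt_id s).add_const a₀).sub
    (((hasDerivAt_exp _).comp s hlin).const_mul a₁)).congr_deriv (by ring)

theorem neg_exp_div_mul_exp_eq_neg_inv (a₀ τ : ℝ) (hτ : τ ≠ 0) :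
    -Real.exp (-1 - τ * a₀) / τ * Real.exp (-(-a₀ - 1 / τ) * τ) = -1 / τ := by
  have hexponent : -(-a₀ - 1 / τ) * τ = -(-1 - τ * a₀) := by
    field_simp
    ring
  rw [hexponent, Real.exp_neg]
  field_simp [Real.exp_ne_zero]

theorem stmt_1 (a₀ τ₁ : ℝ) (hτ₁ : 0 < τ₁)
    (a₁ : ℝ) (ha₁ : a₁ = -Real.exp (-1 - τ₁ * a₀) / τ₁)
    (sstar : ℂ) (hs : sstar = ((-a₀ - 1 / τ₁ : ℝ) : ℂ))
    (Δ : ℂ → ℂ)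
    (hΔ : ∀ s, Δ s = s + (a₀ : ℂ) - (a₁ : ℂ) * Complex.exp (-s * (τ₁ : ℂ))) :
    Δ sstar = 0 ∧ deriv Δ sstar = 0 := by
  have hτ : (τ₁ : ℂ) ≠ 0 := ofReal_ne_zero.mpr hτ₁.ne'
  have hkey : (a₁ : ℂ) * exp (-sstar * τ₁) = -1 / τ₁ := by
    have h := congrArg ((↑) : ℝ → ℂ) (neg_exp_div_mul_exp_eq_neg_inv a₀ τ₁ hτ₁.ne')
    rw [← ha₁] at h
    push_cast at h
    rw [hs]
    push_cast
    exact h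
  have hderiv : deriv Δ sstar = 1 + a₁ * τ₁ * exp (-sstar * τ₁) := by
    rw [funext hΔ]
    exact (hasDerivAt_add_sub_mul_exp_neg_mul _ _ _ _).deriv
  constructor
  · rw [hΔ, hkey, hs]
    push_cast
    field_simp
    ring
  · rw [hderiv, mul_right_comm, hkey]
    field_simp
    ring
end

section
/- Let τ₁, τ₂ be positive reals with τ₁ ≠ τ₂, a₀ ∈ ℝ, and set s₀ = -a₀ - 1/τ₁ - 1/τ₂, a₁ = -τ₂·e^{s₀τ₁}/(τ₁(τ₂-τ₁)), a₂ = τ₁·e^{s₀τ₂}/(τ₂(τ₂-τ₁)). Then s₀ is a root of multiplicity at least 3 of Δ(s) = s + a₀ - a₁e^{-sτ₁} - a₂e^{-sτ₂}, i.e., Δ(s₀) = Δ'(s₀) = Δ''(s₀) = 0. -/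
/-!
Writing `wᵢ = aᵢ e^{-s₀τᵢ}`, the conditions `Δ(s₀) = Δ'(s₀) = Δ''(s₀) = 0` become the linear system
`w₁ + w₂ = s₀ + a₀`, `τ₁ w₁ + τ₂ w₂ = -1`, `τ₁² w₁ + τ₂² w₂ = 0`. The last two equations form a
Vandermonde system with the solution `w₁ = -τ₂ / (τ₁ (τ₂ - τ₁))`, `w₂ = τ₁ / (τ₂ (τ₂ - τ₁))`,
which is exactly how `a₁, a₂` are chosen; then `w₁ + w₂ = -1/τ₁ - 1/τ₂` fixes `s₀`.
-/

open Complex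

theorem hasDerivAt_cexp_neg_mul (c s : ℂ) :
    HasDerivAt (fun s => exp (-s * c)) (-c * exp (-s * c)) s := by
  simpa [mul_comm] using (((hasDerivAt_id s).neg.mul_const c).cexp)

section TwoDelays

variable (a₀ a₁ a₂ τ₁ τ₂ : ℂ)

theorem deriv_two_delay :
    deriv (fun s => s + a₀ - a₁ * exp (-s * τ₁) - a₂ * exp (-s * τ₂)) =
      fun s => 1 + a₁ * τ₁ * exp (-s * τ₁) + a₂ * τ₂ * exp (-s * τ₂) := by
  funext s
  exact (((((hasDerivAt_id s).add_const a₀).sub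
    ((hasDerivAt_cexp_neg_mul τ₁ s).const_mul a₁)).sub
      ((hasDerivAt_cexp_neg_mul τ₂ s).const_mul a₂)).congr_deriv (by ring)).deriv

theorem iteratedDeriv_two_two_delay :
    iteratedDeriv 2 (fun s => s + a₀ - a₁ * exp (-s * τ₁) - a₂ * exp (-s * τ₂)) =
      fun s => -(a₁ * τ₁ ^ 2 * exp (-s * τ₁) + a₂ * τ₂ ^ 2 * exp (-s * τ₂)) := by
  rw [iteratedDeriv_succ, iteratedDeriv_one, deriv_two_delay]
  funext s
  exact (((((hasDerivAt_cexp_neg_mul τ₁ s).const_mul (a₁ * τ₁)).const_add 1).add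
    ((hasDerivAt_cexp_neg_mul τ₂ s).const_mul (a₂ * τ₂))).congr_deriv (by ring)).deriv

end TwoDelays

theorem triple_root_weights {τ₁ τ₂ : ℝ} (hτ₁ : τ₁ ≠ 0) (hτ₂ : τ₂ ≠ 0) (hne : τ₁ ≠ τ₂) :
    -τ₂ / (τ₁ * (τ₂ - τ₁)) + τ₁ / (τ₂ * (τ₂ - τ₁)) = -(1 / τ₁ + 1 / τ₂) ∧
    τ₁ * (-τ₂ / (τ₁ * (τ₂ - τ₁))) + τ₂ * (τ₁ / (τ₂ * (τ₂ - τ₁))) = -1 ∧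
    τ₁ ^ 2 * (-τ₂ / (τ₁ * (τ₂ - τ₁))) + τ₂ ^ 2 * (τ₁ / (τ₂ * (τ₂ - τ₁))) = 0 := by
  have hsub : τ₂ - τ₁ ≠ 0 := sub_ne_zero.mpr hne.symm
  refine ⟨?_, ?_, ?_⟩ <;> field_simp <;> ring

theorem stmt_2 (τ₁ τ₂ a₀ : ℝ) (hτ₁ : 0 < τ₁) (hτ₂ : 0 < τ₂) (hne : τ₁ ≠ τ₂)
    (s₀ : ℝ) (hs₀ : s₀ = -a₀ - 1 / τ₁ - 1 / τ₂)
    (a₁ : ℝ) (ha₁ : a₁ = -(τ₂ * Real.exp (s₀ * τ₁)) / (τ₁ * (τ₂ - τ₁)))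
    (a₂ : ℝ) (ha₂ : a₂ = (τ₁ * Real.exp (s₀ * τ₂)) / (τ₂ * (τ₂ - τ₁)))
    (Δ : ℂ → ℂ)
    (hΔ : ∀ s, Δ s = s + (a₀ : ℂ) - (a₁ : ℂ) * Complex.exp (-s * (τ₁ : ℂ))
      - (a₂ : ℂ) * Complex.exp (-s * (τ₂ : ℂ))) :
    Δ (s₀ : ℂ) = 0 ∧ deriv Δ (s₀ : ℂ) = 0 ∧ iteratedDeriv 2 Δ (s₀ : ℂ) = 0 := by
  obtain rfl : Δ = _ := funext hΔ
  have hw₁ : a₁ * Real.exp (-s₀ * τ₁) = -τ₂ / (τ₁ * (τ₂ - τ₁)) := by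
    rw [ha₁, neg_mul, Real.exp_neg]; field_simp
  have hw₂ : a₂ * Real.exp (-s₀ * τ₂) = τ₁ / (τ₂ * (τ₂ - τ₁)) := by
    rw [ha₂, neg_mul, Real.exp_neg]; field_simp
  obtain ⟨hsum, hmoment₁, hmoment₂⟩ := triple_root_weights hτ₁.ne' hτ₂.ne' hne
  rw [deriv_two_delay, iteratedDeriv_two_two_delay]
  dsimp only
  refine ⟨?_, ?_, ?_⟩
  · exact_mod_cast (show s₀ + a₀ - a₁ * Real.exp (-s₀ * τ₁) - a₂ * Real.exp (-s₀ * τ₂) = 0 by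
      linear_combination hs₀ - hw₁ - hw₂ - hsum)
  · exact_mod_cast (show 1 + a₁ * τ₁ * Real.exp (-s₀ * τ₁) + a₂ * τ₂ * Real.exp (-s₀ * τ₂) = 0 by
      linear_combination τ₁ * hw₁ + τ₂ * hw₂ + hmoment₁)
  · exact_mod_cast (show -(a₁ * τ₁ ^ 2 * Real.exp (-s₀ * τ₁)
        + a₂ * τ₂ ^ 2 * Real.exp (-s₀ * τ₂)) = 0 by
      linear_combination -(τ₁ ^ 2 * hw₁ + τ₂ ^ 2 * hw₂ + hmoment₂))
end

section
/- Let λ₀ ∈ (0,1) and ω ∈ ℝ, ω ≠ 0, satisfy the real and imaginary part equations cos(λ₀ω) - λ₀²cos(ω) + λ₀² - 1 = 0 and sin(λ₀ω) - λ₀²sin(ω) + λ₀²ω - λ₀ω = 0. Then ((ω - sin ω)² + (1 - cos ω)²)·λ₀ = ω² + 2(cos ω - 1). -/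
theorem stmt_11 (lam₀ ω : ℝ) (hlam : 0 < lam₀ ∧ lam₀ < 1) (hω : ω ≠ 0)
    (h1 : Real.cos (lam₀ * ω) - lam₀ ^ 2 * Real.cos ω + lam₀ ^ 2 - 1 = 0)
    (h2 : Real.sin (lam₀ * ω) - lam₀ ^ 2 * Real.sin ω + lam₀ ^ 2 * ω - lam₀ * ω = 0) :
    ((ω - Real.sin ω) ^ 2 + (1 - Real.cos ω) ^ 2) * lam₀ = ω ^ 2 + 2 * (Real.cos ω - 1) := by
  obtain ⟨hl0, hl1⟩ := hlam
  set s := Real.sin ω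
  set c := Real.cos ω
  have h3 := Real.sin_sq_add_cos_sq (lam₀ * ω)
  have hpy := Real.sin_sq_add_cos_sq ω
  have hne : lam₀ ^ 2 * (1 - lam₀) ≠ 0 := ne_of_gt (mul_pos (pow_pos hl0 2) (by linarith))
  have hfac : lam₀ ^ 2 * (1 - lam₀) *
      (2 * (1 + lam₀) * (c - 1) + 2 * lam₀ * ω * s + ω ^ 2 * (1 - lam₀)) = 0 := by
    have hc : Real.cos (lam₀ * ω) = lam₀ ^ 2 * c - lam₀ ^ 2 + 1 := by linarith
    have hs : Real.sin (lam₀ * ω) = lam₀ ^ 2 * s - lam₀ ^ 2 * ω + lam₀ * ω := by linarith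
    rw [hc, hs] at h3
    linear_combination h3 - lam₀ ^ 4 * hpy
  have hR : 2 * (1 + lam₀) * (c - 1) + 2 * lam₀ * ω * s + ω ^ 2 * (1 - lam₀) = 0 :=
    (mul_eq_zero.mp hfac).resolve_left hne
  linear_combination lam₀ * hpy - hR
end

section
/- If ζ is a nonzero real number and s₀ = 2ζi is a root of f(s) = s - 2 + e^{-s}(s+2), then f'(s₀) = 1 - e^{-2ζi}(1 - 2ζi) ≠ 0, i.e., s₀ is a simple root. -/
/-!
Here `f'(s) = 1 - (s + 1) e^{-s}`. At `s = 2ζi` the factor `e^{-s}` has modulus one, while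
`|1 + 2ζi| > 1` for `ζ ≠ 0`, so `(s + 1) e^{-s}` cannot equal one.
-/

open Complex

theorem hasDerivAt_sub_two_add_add_two_mul_exp_neg (s : ℂ) :
    HasDerivAt (fun s : ℂ => s - 2 + (s + 2) * exp (-s)) (1 - (s + 1) * exp (-s)) s := by
  refine (((hasDerivAt_id' s).sub_const 2).add
    (((hasDerivAt_id' s).add_const 2).mul (hasDerivAt_neg s).cexp)).congr_deriv ?_
  ring

theorem one_lt_norm_ofReal_mul_I_add_one {t : ℝ} (ht : t ≠ 0) : 1 < ‖(t : ℂ) * I + 1‖ := by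
  have hnormSq : normSq ((t : ℂ) * I + 1) = 1 + t ^ 2 := by
    simp [normSq_apply]
    ring
  rw [← one_lt_sq_iff₀ (norm_nonneg _), Complex.sq_norm, hnormSq]
  exact lt_add_of_pos_right 1 (by positivity)

theorem ofReal_mul_I_add_one_mul_exp_neg_ne_one {t : ℝ} (ht : t ≠ 0) :
    ((t : ℂ) * I + 1) * exp (-((t : ℂ) * I)) ≠ 1 := by
  intro h
  have hnorm := congrArg norm h
  rw [norm_mul, ← neg_mul, ← ofReal_neg, norm_exp_ofReal_mul_I, mul_one, norm_one] at hnorm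
  exact (one_lt_norm_ofReal_mul_I_add_one ht).ne' hnorm

theorem stmt_13_general (ζ : ℝ) (hζ : ζ ≠ 0)
    (f : ℂ → ℂ) (hf : ∀ s, f s = s - 2 + (s + 2) * Complex.exp (-s)) :
    deriv f (2 * (ζ : ℂ) * Complex.I) ≠ 0 := by
  obtain rfl : f = fun s => s - 2 + (s + 2) * exp (-s) := funext hf
  have hs₀ : 2 * (ζ : ℂ) * I = ((2 * ζ : ℝ) : ℂ) * I := by push_cast; ring
  rw [hs₀, (hasDerivAt_sub_two_add_add_two_mul_exp_neg _).deriv, sub_ne_zero]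
  exact (ofReal_mul_I_add_one_mul_exp_neg_ne_one (mul_ne_zero two_ne_zero hζ)).symm

theorem stmt_13 (ζ : ℝ) (hζ : ζ ≠ 0)
    (f : ℂ → ℂ) (hf : ∀ s, f s = s - 2 + (s + 2) * Complex.exp (-s))
    (hroot : f (2 * (ζ : ℂ) * Complex.I) = 0) :
    deriv f (2 * (ζ : ℂ) * Complex.I) ≠ 0 :=
  stmt_13_general ζ hζ f hf
end

section
/- Writing s = 2ζi with ζ ∈ ℝ, a purely imaginary s is a root of f(s) = s - 2 + e^{-s}(s+2), i.e. f(2ζi) = 0, if and only if ζ = 0 or tan(ζ) = ζ (with cos ζ ≠ 0). -/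
open Complex

theorem stmt_14 (ζ : ℝ) (hc : Real.cos ζ ≠ 0)
    (f : ℂ → ℂ) (hf : ∀ s, f s = s - 2 + (s + 2) * Complex.exp (-s)) :
    f (2 * (ζ : ℂ) * Complex.I) = 0 ↔ Real.tan ζ = ζ := by
  rw [hf]
  have hs : Real.sin ζ ^ 2 + Real.cos ζ ^ 2 = 1 := Real.sin_sq_add_cos_sq ζ
  rw [Real.tan_eq_sin_div_cos, div_eq_iff hc]
  rw [Complex.ext_iff]
  simp [Complex.exp_re, Complex.exp_im]
  have hcos : Real.cos (2 * ζ) = 1 - 2 * Real.sin ζ ^ 2 := Real.cos_two_mul' ζ ▸ by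
    rw [Real.cos_sq' ζ]; ring
  rw [hcos, Real.sin_two_mul]
  constructor
  · rintro ⟨h1, h2⟩
    have key : Real.cos ζ * (Real.sin ζ - ζ * Real.cos ζ) = 0 := by
      linear_combination (-(1:ℝ)/4) * h2 - ζ * hs
    rcases mul_eq_zero.1 key with h | h
    · exact absurd h hc
    · linarith
  · intro h
    constructor
    · linear_combination (-4 * Real.sin ζ) * h
    · linear_combination (-4 * Real.cos ζ) * h - 4 * ζ * hs
end

section
/- Let λ₀ ∈ (0,1), ω ∈ ℝ satisfy the characteristic equations cos(λ₀ω) - λ₀²cos ω + λ₀² - 1 = 0 and sin(λ₀ω) - λ₀²sin ω + λ₀²ω - λ₀ω = 0. Define R₁ = λ₀²(1-λ₀)(cos ω - 1), I₁ = λ₀²(1-λ₀)(ω - sin ω), R₂ = 2λ₀ - 2λ₀cos ω - λ₀²ω sin ω + λ₀²ω² - λ₀ω², I₂ = 2λ₀(sin ω - ω) + λ₀²ω(1 - cos ω). Then -R₁R₂ - I₁I₂ = 2λ₀³(1-λ₀)(ω cos(ω/2) - 2 sin(ω/2))². In particular -R₁R₂ - I₁I₂ ≥ 0. -/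
theorem stmt_15 (lam₀ ω : ℝ) (hlam : 0 < lam₀ ∧ lam₀ < 1)
    (h1 : Real.cos (lam₀ * ω) - lam₀ ^ 2 * Real.cos ω + lam₀ ^ 2 - 1 = 0)
    (h2 : Real.sin (lam₀ * ω) - lam₀ ^ 2 * Real.sin ω + lam₀ ^ 2 * ω - lam₀ * ω = 0)
    (R₁ I₁ R₂ I₂ : ℝ)
    (hR₁ : R₁ = lam₀ ^ 2 * (1 - lam₀) * (Real.cos ω - 1))
    (hI₁ : I₁ = lam₀ ^ 2 * (1 - lam₀) * (ω - Real.sin ω))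
    (hR₂ : R₂ = 2 * lam₀ - 2 * lam₀ * Real.cos ω - lam₀ ^ 2 * ω * Real.sin ω
      + lam₀ ^ 2 * ω ^ 2 - lam₀ * ω ^ 2)
    (hI₂ : I₂ = 2 * lam₀ * (Real.sin ω - ω) + lam₀ ^ 2 * ω * (1 - Real.cos ω)) :
    -R₁ * R₂ - I₁ * I₂
        = 2 * lam₀ ^ 3 * (1 - lam₀) * (ω * Real.cos (ω / 2) - 2 * Real.sin (ω / 2)) ^ 2 ∧
      0 ≤ -R₁ * R₂ - I₁ * I₂ := by
  obtain ⟨hl0, hl1⟩ := hlam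
  have hc := Real.cos_two_mul (ω / 2)
  have hs := Real.sin_two_mul (ω / 2)
  rw [show 2 * (ω / 2) = ω by ring] at hc hs
  have hpyth := Real.sin_sq_add_cos_sq (ω / 2)
  have heq : -R₁ * R₂ - I₁ * I₂
      = 2 * lam₀ ^ 3 * (1 - lam₀) * (ω * Real.cos (ω / 2) - 2 * Real.sin (ω / 2)) ^ 2 := by
    subst hR₁ hI₁ hR₂ hI₂
    rw [hc, hs]
    linear_combination (8 * lam₀ ^ 3 * (1 - lam₀) * (Real.cos (ω / 2) ^ 2 - 1)) * hpyth
  refine ⟨heq, ?_⟩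
  rw [heq]
  have h3 : (0:ℝ) < lam₀ ^ 3 * (1 - lam₀) := by
    have : (0:ℝ) < lam₀ ^ 3 := by positivity
    have : (0:ℝ) < 1 - lam₀ := by linarith
    positivity
  nlinarith [sq_nonneg (ω * Real.cos (ω / 2) - 2 * Real.sin (ω / 2)), h3,
    mul_nonneg h3.le (sq_nonneg (ω * Real.cos (ω / 2) - 2 * Real.sin (ω / 2)))]
end
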